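/- arXiv:2205.02294 — 2 statements merged into one kernel-verified Lean document; each statement's English description precedes it below -/
import Mathlib

section
/- A finite distributive lattice L is Boolean if and only if for every atom a of L, the map x ↦ a ∨ x is a bijection from {x ∈ L : x ≱ a} onto {x ∈ L : x ≥ a}. -/
/-- A finite distributive lattice `L` is Boolean (i.e., complemented) if and only if for
every atom `a` of `L`, the map `x ↦ a ⊔ x` is a bijection from `{x | ¬ a ≤ x}` onto
`{x | a ≤ x}`. -/
theorem boolean_iff_atom_join_maps_bijective {L : Type*} [DistribLattice L]
    [BoundedOrder L] [Fintype L] :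
    ComplementedLattice L ↔
      ∀ a : L, IsAtom a →
        Set.BijOn (fun x => a ⊔ x) {x : L | ¬ a ≤ x} {x : L | a ≤ x} := by
  classical
  have atom_inf_bot : ∀ {a x : L}, IsAtom a → ¬ a ≤ x → a ⊓ x = ⊥ := by
    intro a x ha hax
    rcases lt_or_eq_of_le (inf_le_left : a ⊓ x ≤ a) with h | h
    · exact ha.2 _ h
    · exact absurd (h ▸ (inf_le_right : a ⊓ x ≤ x)) hax
  constructor
  · intro hC a ha
    refine ⟨fun x _ => le_sup_left, ?_, ?_⟩
    · -- injectivity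
      intro x hx y hy hxy
      simp only [Set.mem_setOf_eq] at hx hy hxy
      have hx' : a ⊓ x = ⊥ := atom_inf_bot ha hx
      have hy' : a ⊓ y = ⊥ := atom_inf_bot ha hy
      have key : ∀ u v : L, ¬ a ≤ u → a ⊔ u = a ⊔ v → u ≤ v := by
        intro u v hu huv
        have : u = (a ⊓ u) ⊔ (v ⊓ u) := by
          rw [← inf_sup_right, ← huv, inf_eq_right.2 le_sup_right]
        rw [this, atom_inf_bot ha hu, bot_sup_eq]
        exact inf_le_left
      exact le_antisymm (key x y hx hxy) (key y x hy hxy.symm)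
    · -- surjectivity
      intro y hy
      simp only [Set.mem_setOf_eq] at hy
      obtain ⟨c, hc⟩ := exists_isCompl a
      refine ⟨y ⊓ c, ?_, ?_⟩
      · intro hle
        have : a ≤ c := hle.trans inf_le_right
        exact ha.1 (le_bot_iff.1 ((le_inf le_rfl this).trans hc.disjoint.le_bot))
      · simp only [Set.mem_setOf_eq]
        show a ⊔ (y ⊓ c) = y
        rw [sup_inf_left, hc.sup_eq_top, inf_top_eq, sup_eq_right.2 hy]
  · intro h
    -- every sup-irreducible is an atom
    have irred_atom : ∀ j : L, SupIrred j → IsAtom j := by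
      intro j hj
      have hjbot : j ≠ ⊥ := hj.ne_bot
      obtain ⟨a, ha, haj⟩ := (eq_bot_or_exists_atom_le j).resolve_left hjbot
      obtain ⟨x, hx, hxj⟩ := (h a ha).2.2 (show j ∈ {x : L | a ≤ x} from haj)
      simp only [Set.mem_setOf_eq] at hx
      rcases hj.2 hxj with h1 | h2
      · exact h1 ▸ ha
      · exact absurd (h2 ▸ haj) hx
    -- decompose ⊤ into sup-irreducibles, hence atoms
    obtain ⟨s, hs, hsirr⟩ := exists_supIrred_decomposition (⊤ : L)
    have hatoms : ∀ b ∈ s, IsAtom b := fun b hb => irred_atom b (hsirr hb)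
    constructor
    intro x
    set t := s.filter (fun a => ¬ a ≤ x) with ht
    refine ⟨t.sup id, ?_, ?_⟩
    · rw [disjoint_iff]
      rw [Finset.sup_inf_distrib_left]
      apply (Finset.sup_eq_bot_iff _ _).2
      intro b hb
      obtain ⟨hbs, hbx⟩ := Finset.mem_filter.1 hb
      have := atom_inf_bot (hatoms b hbs) hbx
      simpa [inf_comm] using this
    · rw [codisjoint_iff, eq_top_iff, ← hs]
      apply Finset.sup_le
      intro b hb
      by_cases hbx : b ≤ x
      · exact le_sup_of_le_left hbx
      · exact le_sup_of_le_right (Finset.le_sup (f := id) (Finset.mem_filter.2 ⟨hb, hbx⟩))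
end

section
/- In a finite distributive lattice L in which for every atom a the map x ↦ a ∨ x from the complement of the filter of a to the filter of a is bijective, the poset of join-irreducible elements of L is an antichain. -/
/-- In a finite distributive lattice `L` in which for every atom `a` the map `x ↦ a ⊔ x`
from the complement of the filter of `a` to the filter of `a` is bijective, the poset of
join-irreducible elements of `L` is an antichain. -/
theorem supIrred_antichain_of_atom_join_maps_bijective {L : Type*} [DistribLattice L]
    [OrderBot L] [Fintype L]
    (h : ∀ a : L, IsAtom a →
      Set.BijOn (fun x => a ⊔ x) {x : L | ¬ a ≤ x} {x : L | a ≤ x}) :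
    IsAntichain (· ≤ ·) {x : L | SupIrred x} := by
  have key : ∀ b : L, SupIrred b → IsAtom b := by
    intro b hb
    have hbne : b ≠ ⊥ := by
      intro hbot
      exact hb.1 (hbot ▸ isMin_bot)
    obtain ⟨a, ha, hab⟩ := (eq_bot_or_exists_atom_le b).resolve_left hbne
    obtain ⟨x, hx, hax⟩ := (h a ha).surjOn hab
    simp only [Set.mem_setOf_eq] at hx hax
    rcases hb.2 hax with h1 | h2
    · exact h1 ▸ ha
    · exact absurd (h2 ▸ hab) hx
  intro p hp q hq hne hle
  have hpa := key p hp
  have hqa := key q hq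
  rcases (hqa.le_iff.mp hle) with h1 | h2
  · exact hpa.1 h1
  · exact hne h2
end
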